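/- Let X₁, ..., X_n be i.i.d. real random variables with E[|X₁|⁸] < ∞, let Z̄_n = (1/n)Σ X_i, and let X₁* denote a draw uniformly at random from {X₁,...,X_n} (a bootstrap sample). Then P[ E[|X₁* − Z̄_n|⁴ | X₁,...,X_n] ≥ 2⁴(E[|X₁|⁴] + |E[X₁]|⁴) + 2⁵ ] = O(n^{-1}). That is, with probability at least 1 − O(n^{-1}) over the original sample, the conditional fourth central moment of a bootstrap draw is bounded by an explicit constant depending only on the population moments. -/

import Mathlib

/-!
Convexity gives `(1/n) Σ |Xᵢ - Z̄ₙ|⁴ ≤ 8 (1/n) Σ |Xᵢ|⁴ + 8 |Z̄ₙ|⁴`, so the threshold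
`2⁴ (E|X₁|⁴ + |E X₁|⁴) + 2⁵` is only reached if the empirical fourth moment exceeds `E|X₁|⁴`
by `1` or `|Z̄ₙ|⁴` exceeds `|E X₁|⁴` by `1`. By continuity of `t ↦ |t|⁴` the latter forces
`|Z̄ₙ - E X₁| ≥ δ` for some `δ > 0` depending only on `E X₁`. Both events are deviations of a
sample mean of i.i.d. square-integrable variables (`|Xᵢ|⁴` is one since `E|X₁|⁸ < ∞`), so
Chebyshev's inequality bounds each probability by `O(1/n)`.
-/

open MeasureTheory ProbabilityTheory Finset

noncomputable def sampleMean {Ω : Type*} (X : ℕ → Ω → ℝ) (n : ℕ) (ω : Ω) : ℝ :=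
  (n : ℝ)⁻¹ * ∑ i ∈ range n, X i ω

lemma abs_sub_pow_four_le (x z : ℝ) : |x - z| ^ 4 ≤ 8 * (|x| ^ 4 + |z| ^ 4) := by
  have h4 : Even 4 := by decide
  have h := h4.add_pow_le (a := x) (b := -z)
  rw [h4.neg_pow, ← sub_eq_add_neg] at h
  rw [h4.pow_abs, h4.pow_abs, h4.pow_abs]
  norm_num at h
  exact h

lemma mean_abs_sub_pow_four_le (n : ℕ) (x : ℕ → ℝ) (z : ℝ) :
    (n : ℝ)⁻¹ * ∑ i ∈ range n, |x i - z| ^ 4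
      ≤ 8 * ((n : ℝ)⁻¹ * ∑ i ∈ range n, |x i| ^ 4) + 8 * |z| ^ 4 := by
  rcases Nat.eq_zero_or_pos n with rfl | hn
  · simp only [CharP.cast_eq_zero, inv_zero, zero_mul, mul_zero, zero_add]
    positivity
  calc (n : ℝ)⁻¹ * ∑ i ∈ range n, |x i - z| ^ 4
      ≤ (n : ℝ)⁻¹ * ∑ i ∈ range n, 8 * (|x i| ^ 4 + |z| ^ 4) := by
        gcongr with i; exact abs_sub_pow_four_le _ _
    _ = 8 * ((n : ℝ)⁻¹ * ∑ i ∈ range n, |x i| ^ 4) + 8 * |z| ^ 4 := by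
        rw [← mul_sum, sum_add_distrib, sum_const, card_range, nsmul_eq_mul]
        field_simp

lemma exists_pos_abs_pow_four_lt (m : ℝ) :
    ∃ δ > 0, ∀ z, |z - m| < δ → |z| ^ 4 < |m| ^ 4 + 1 := by
  have hcont : Continuous fun z : ℝ => |z| ^ 4 := by fun_prop
  obtain ⟨δ, hδ, h⟩ := Metric.continuous_iff.1 hcont m 1 one_pos
  refine ⟨δ, hδ, fun z hz => ?_⟩
  have := (abs_lt.1 (h z hz)).2
  linarith

lemma setOf_le_mean_abs_sub_mean_pow_four_subset {Ω : Type*} (X : ℕ → Ω → ℝ) (n : ℕ)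
    {M m δ : ℝ} (hM : 0 ≤ M) (hδ : ∀ z, |z - m| < δ → |z| ^ 4 < |m| ^ 4 + 1) :
    {ω | 2 ^ 4 * (M + |m| ^ 4) + 2 ^ 5
        ≤ (n : ℝ)⁻¹ * ∑ i ∈ range n, |X i ω - (n : ℝ)⁻¹ * ∑ j ∈ range n, X j ω| ^ 4}
      ⊆ {ω | 1 ≤ |sampleMean (fun i ω => |X i ω| ^ 4) n ω - M|}
        ∪ {ω | δ ≤ |sampleMean X n ω - m|} := by
  intro ω hω
  by_contra h
  simp only [Set.mem_union, Set.mem_ofPred_eq, not_or, not_le, sampleMean] at h hω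
  have hX4 := (abs_lt.1 h.1).2
  have hZ4 := hδ _ h.2
  have := mean_abs_sub_pow_four_le n (X · ω) ((n : ℝ)⁻¹ * ∑ j ∈ range n, X j ω)
  nlinarith [pow_nonneg (abs_nonneg m) 4]

lemma meas_ge_sampleMean_le_variance_div {Ω : Type*} [MeasurableSpace Ω] {μ : Measure Ω}
    [IsFiniteMeasure μ] {X : ℕ → Ω → ℝ} (hindep : Pairwise fun i j => IndepFun (X i) (X j) μ)
    (hident : ∀ i, IdentDistrib (X i) (X 0) μ μ) (hX : MemLp (X 0) 2 μ) {n : ℕ} (hn : n ≠ 0)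
    {δ : ℝ} (hδ : 0 < δ) :
    μ {ω | δ ≤ |sampleMean X n ω - μ[X 0]|}
      ≤ ENNReal.ofReal (variance (X 0) μ / (n * δ ^ 2)) := by
  have hXi : ∀ i, MemLp (X i) 2 μ := fun i => (hident i).memLp_iff.2 hX
  have hS : MemLp (sampleMean X n) 2 μ := by
    have := (memLp_finsetSum' (range n) fun i _ => hXi i).const_mul ((n : ℝ)⁻¹)
    convert this using 1
    ext ω
    simp [sampleMean]
  have hmean : μ[sampleMean X n] = μ[X 0] := by
    simp only [sampleMean]
    rw [integral_const_mul, integral_finsetSum _ fun i _ => (hXi i).integrable one_le_two]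
    simp only [fun i => (hident i).integral_eq, sum_const, card_range, nsmul_eq_mul]
    field_simp
  have hvar : variance (sampleMean X n) μ = variance (X 0) μ / n := by
    have hsum := IndepFun.variance_sum (s := range n) (fun i _ => hXi i)
      fun i _ j _ hij => hindep hij
    simp only [fun i => (hident i).variance_eq, sum_const, card_range, nsmul_eq_mul] at hsum
    have : sampleMean X n = fun ω => (n : ℝ)⁻¹ * (∑ i ∈ range n, X i) ω := by
      ext ω; simp [sampleMean]
    rw [this, variance_const_mul, hsum]
    field_simp
  have h := meas_ge_le_variance_div_sq hS hδ
  rwa [hmean, hvar, div_div] at h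

/-- For i.i.d. real random variables with finite eighth moment, with
probability at least `1 - O(n⁻¹)` the conditional fourth central moment of a bootstrap
draw, `(1/n) Σ_{i<n} |X_i - Z̄_n|⁴`, is bounded by `2⁴(E|X₁|⁴ + |E X₁|⁴) + 2⁵`. -/
theorem stmt10
    (Ω : Type) [MeasurableSpace Ω] (μ : Measure Ω) [IsProbabilityMeasure μ]
    (X : ℕ → Ω → ℝ)
    (hmeas : ∀ i, Measurable (X i))
    (hindep : iIndepFun X μ)
    (hident : ∀ i, Measure.map (X i) μ = Measure.map (X 0) μ)
    (hmom8 : Integrable (fun ω => |X 0 ω| ^ 8) μ) :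
    ∃ C : ℝ, 0 < C ∧ ∀ n : ℕ, 1 ≤ n →
      (μ {ω | 2 ^ 4 * ((∫ ω', |X 0 ω'| ^ 4 ∂μ) + |∫ ω', X 0 ω' ∂μ| ^ 4) + 2 ^ 5
          ≤ (n : ℝ)⁻¹ * ∑ i ∈ Finset.range n,
              |X i ω - (n : ℝ)⁻¹ * ∑ j ∈ Finset.range n, X j ω| ^ 4}).toReal
        ≤ C / n := by
  set Y : ℕ → Ω → ℝ := fun i ω => |X i ω| ^ 4
  have hidentX i : IdentDistrib (X i) (X 0) μ μ :=
    ⟨(hmeas i).aemeasurable, (hmeas 0).aemeasurable, hident i⟩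
  have hidentY i : IdentDistrib (Y i) (Y 0) μ μ :=
    (hidentX i).comp (u := fun x => |x| ^ 4) (by fun_prop)
  have hindepY : iIndepFun Y μ := hindep.comp (fun _ x => |x| ^ 4) fun _ => by fun_prop
  have hX2 : MemLp (X 0) 2 μ := (memLp_two_iff_integrable_sq (hmeas 0).aestronglyMeasurable).2 <| by
    simpa using integrable_norm_pow_of_le (hmeas 0).aestronglyMeasurable (by norm_num : 2 ≤ 8)
      (by simpa using hmom8)
  have hY2 : MemLp (Y 0) 2 μ := (memLp_two_iff_integrable_sq (by fun_prop)).2 <| by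
    simpa only [Y, ← pow_mul] using hmom8
  have hm4 : 0 ≤ ∫ ω, |X 0 ω| ^ 4 ∂μ := integral_nonneg fun _ => by positivity
  have hVX := variance_nonneg (X 0) μ
  have hVY := variance_nonneg (Y 0) μ
  obtain ⟨δ, hδ, hnear⟩ := exists_pos_abs_pow_four_lt (μ[X 0])
  refine ⟨variance (Y 0) μ + variance (X 0) μ / δ ^ 2 + 1, by positivity, fun n hn => ?_⟩
  have hn0 : n ≠ 0 := Nat.one_le_iff_ne_zero.1 hn
  have hunion := (measure_union_le _ _).trans <| add_le_add
    (meas_ge_sampleMean_le_variance_div (fun _ _ h => hindepY.indepFun h) hidentY hY2 hn0 one_pos)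
    (meas_ge_sampleMean_le_variance_div (fun _ _ h => hindep.indepFun h) hidentX hX2 hn0 hδ)
  have hμ := (measure_mono (setOf_le_mean_abs_sub_mean_pow_four_subset X n hm4 hnear)).trans hunion
  rw [← ENNReal.ofReal_add (by positivity) (by positivity)] at hμ
  refine (ENNReal.toReal_le_of_le_ofReal (by positivity) hμ).trans ?_
  have hsum : variance (Y 0) μ / (n * 1 ^ 2) + variance (X 0) μ / (n * δ ^ 2)
      = (variance (Y 0) μ + variance (X 0) μ / δ ^ 2) / n := by
    field_simp
  rw [hsum]
  gcongr ?_ / _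
  linarith
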